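/- arXiv:2310.00368 — 2 statements merged into one kernel-verified Lean document; each statement's English description precedes it below -/
import Mathlib

section
/- Let D ⊆ ℂⁿ be a bounded domain containing the origin o, let u and v be Lebesgue measurable functions on D that are bounded above near o, and let g be a nonnegative Lebesgue measurable function on D. If g²e^{2(l₁v - (1+l₂)u)} is integrable near o for some l₁ > 0 and l₂ > 0, then g²e^{-2u} - g²e^{-2·max{u, (l₁/l₂)v}} is integrable on a small enough neighborhood of o. -/
open MeasureTheory Filter Topology
open scoped ENNReal NNReal

noncomputable section

/-- `ℂⁿ`. -/
abbrev Cn (n : ℕ) : Type := Fin n → ℂ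

variable {n : ℕ}

/-- The exponential function `EReal → ℝ≥0∞`, with `exp ⊥ = 0` and `exp ⊤ = ⊤`. -/
def expE (x : EReal) : ℝ≥0∞ :=
  if x = ⊥ then 0 else if x = ⊤ then ⊤ else ENNReal.ofReal (Real.exp x.toReal)

/-- The logarithm `ℝ → EReal`, with value `⊥` for `x ≤ 0`. -/
def elog (x : ℝ) : EReal := if x ≤ 0 then (⊥ : EReal) else ((Real.log x : ℝ) : EReal)

/-- The density `e^{c·φ} : ℂⁿ → [0,∞]` associated to an extended-real-valued `φ`. -/
def wexp (c : ℝ) (φ : Cn n → EReal) (z : Cn n) : ℝ≥0∞ := expE ((c : EReal) * φ z)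

/-- `|f₀|² = ∑ⱼ |f₀ⱼ|²` as a `[0,∞]`-valued density, for a tuple `f₀` of functions. -/
def normSq2 {m : ℕ} (f₀ : Fin m → Cn n → ℂ) (z : Cn n) : ℝ≥0∞ :=
  ∑ j, (‖f₀ j z‖₊ : ℝ≥0∞) ^ 2

/-- `log |f₀| = (1/2) log ∑ⱼ |f₀ⱼ|²` for a tuple `f₀`. -/
def logAbsT {m : ℕ} (f₀ : Fin m → Cn n → ℂ) (z : Cn n) : EReal :=
  elog (Real.sqrt (∑ j, ‖f₀ j z‖ ^ 2))

/-- The weight `|f₀|² e^{-2φ₀}`. -/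
def dens0 {m : ℕ} (f₀ : Fin m → Cn n → ℂ) (φ₀ : Cn n → EReal) (z : Cn n) : ℝ≥0∞ :=
  normSq2 f₀ z * wexp (-2) φ₀ z

/-- A nonnegative function is (Lebesgue-)integrable near the origin. -/
def IntNear (g : Cn n → ℝ≥0∞) : Prop := ∃ U ∈ 𝓝 (0 : Cn n), (∫⁻ z in U, g z) < ⊤

/-- `ψ ≤ φ + O(1)` near the origin. -/
def leO (ψ φ : Cn n → EReal) : Prop := ∃ C : ℝ, ∀ᶠ z in 𝓝 (0 : Cn n), ψ z ≤ φ z + (C : EReal)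

/-- `ψ = φ + O(1)` near the origin. -/
def eqO (ψ φ : Cn n → EReal) : Prop := leO ψ φ ∧ leO φ ψ

/-- The truncated average of `u` over the circle `θ ↦ z + r e^{iθ} w`, truncated below at `-m`. -/
def circleAvg (u : Cn n → EReal) (z w : Cn n) (r : ℝ) (m : ℕ) : ℝ :=
  (2 * Real.pi)⁻¹ * ∫ θ in (0:ℝ)..(2 * Real.pi),
    (max (u (z + ((r : ℂ) * Complex.exp (Complex.I * (θ : ℂ))) • w)) ((-(m : ℝ) : ℝ) : EReal)).toReal

/-- `u` is plurisubharmonic on `Ω`: it is upper semicontinuous on `Ω`, takes values in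
`[-∞, ∞)`, is not identically `-∞` on any connected component of `Ω`, and satisfies the
sub-mean value inequality on all small circles inside complex lines. -/
structure PSHOn (u : Cn n → EReal) (Ω : Set (Cn n)) : Prop where
  usc : UpperSemicontinuousOn u Ω
  lt_top : ∀ z ∈ Ω, u z < ⊤
  not_botOnComponents : ∀ z ∈ Ω, ∃ w ∈ connectedComponentIn Ω z, u w ≠ ⊥
  submean : ∀ z ∈ Ω, ∀ w : Cn n, ∃ ε > 0, ∀ r : ℝ, 0 < r → r < ε →
    u z ≤ ⨅ m : ℕ, ((circleAvg u z w r m : ℝ) : EReal)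

/-- `u` is plurisubharmonic near the origin. -/
def PSHNear (u : Cn n → EReal) : Prop := ∃ U ∈ 𝓝 (0 : Cn n), IsOpen U ∧ PSHOn u U

/-- `f` is holomorphic near the origin. -/
def HoloNear (f : Cn n → ℂ) : Prop := ∃ U ∈ 𝓝 (0 : Cn n), IsOpen U ∧ DifferentiableOn ℂ f U

/-- `Φ` is a (local) Zhou weight near the origin related to a general nonnegative
weight `W`. -/
structure IsZhouWeightFor (W : Cn n → ℝ≥0∞) (Φ : Cn n → EReal) : Prop where
  psh : PSHNear Φ
  intN : ∃ N₁ : ℕ, ∀ N₀ : ℕ, N₁ ≤ N₀ →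
    IntNear fun z => W z * ENNReal.ofReal (‖z‖ ^ (2 * N₀)) * wexp (-2) Φ z
  nonint : ¬ IntNear fun z => W z * wexp (-2) Φ z
  maximal : ∀ φ' : Cn n → EReal, PSHNear φ' → leO Φ φ' →
    (¬ IntNear fun z => W z * wexp (-2) φ' z) → eqO φ' Φ

/-- `Φ` is a local Zhou weight related to `|f₀|² e^{-2φ₀}` near the origin (including the
standing assumptions that `f₀` is a tuple of holomorphic functions near `o`, `φ₀` is
plurisubharmonic near `o`, and `|f₀|² e^{-2φ₀}` is integrable near `o`). -/
structure IsLocalZhouWeight {m : ℕ} (f₀ : Fin m → Cn n → ℂ) (φ₀ : Cn n → EReal)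
    (Φ : Cn n → EReal) : Prop where
  holo : ∀ j, HoloNear (f₀ j)
  psh₀ : PSHNear φ₀
  int₀ : IntNear (dens0 f₀ φ₀)
  zhou : IsZhouWeightFor (dens0 f₀ φ₀) Φ

/-- The Zhou number (relative type) `σ(ψ, Φ) = sup { b ≥ 0 : ψ ≤ bΦ + O(1) near o }`. -/
def zhouNumber (ψ Φ : Cn n → EReal) : ℝ :=
  sSup {b : ℝ | 0 ≤ b ∧ leO ψ fun z => (b : EReal) * Φ z}

/-- `log ‖f‖ : ℂⁿ → EReal`. -/
def logAbs (f : Cn n → ℂ) (z : Cn n) : EReal := elog ‖f z‖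

/-- `ν(f, Φ) = σ(log|f|, Φ)`. -/
def nuNumber (f : Cn n → ℂ) (Φ : Cn n → EReal) : ℝ := zhouNumber (logAbs f) Φ

/-- The jumping number `c_o^G(Φ) = sup { c ≥ 0 : |G|² e^{-2cΦ} integrable near o }`. -/
def jumping (G : Cn n → ℂ) (Φ : Cn n → EReal) : ℝ :=
  sSup {c : ℝ | 0 ≤ c ∧ IntNear fun z => (‖G z‖₊ : ℝ≥0∞) ^ 2 * wexp (-2 * c) Φ z}

/-- The inclusion `ℐ(φ)ₒ ⊆ ℐ(ψ)ₒ` of multiplier ideals at the origin. -/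
def mIdealLE (φ ψ : Cn n → EReal) : Prop :=
  ∀ f : Cn n → ℂ, HoloNear f →
    (IntNear fun z => (‖f z‖₊ : ℝ≥0∞) ^ 2 * wexp (-2) φ z) →
    IntNear fun z => (‖f z‖₊ : ℝ≥0∞) ^ 2 * wexp (-2) ψ z

/-- The Tian function `Tn(t; f, v, φ₀) = sup { c ≥ 0 : |f|^{2t} e^{-2cv - 2φ₀} integrable near o }`. -/
def tian (t : ℝ) (f : Cn n → ℂ) (v φ₀ : Cn n → EReal) : ℝ :=
  sSup {c : ℝ | 0 ≤ c ∧
    IntNear fun z => ENNReal.ofReal (‖f z‖ ^ (2 * t)) * wexp (-2 * c) v z * wexp (-2) φ₀ z}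

/-- integrability of `g²e^{-2u} - g²e^{-2 max{u,(l₁/l₂)v}}` near the
origin. -/
theorem statement12 {n : ℕ} (D : Set (Cn n)) (hD : IsOpen D) (hDconn : IsConnected D)
    (hDb : Bornology.IsBounded D) (h0 : (0 : Cn n) ∈ D)
    (u v g : Cn n → ℝ) (hu : Measurable u) (hv : Measurable v) (hg : Measurable g)
    (hub : ∃ M : ℝ, ∀ᶠ z in 𝓝 (0 : Cn n), u z ≤ M)
    (hvb : ∃ M : ℝ, ∀ᶠ z in 𝓝 (0 : Cn n), v z ≤ M)
    (hgpos : ∀ z ∈ D, 0 ≤ g z)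
    (l₁ l₂ : ℝ) (hl₁ : 0 < l₁) (hl₂ : 0 < l₂)
    (hint : ∃ U ∈ 𝓝 (0 : Cn n), U ⊆ D ∧
      IntegrableOn (fun z => g z ^ 2 * Real.exp (2 * (l₁ * v z - (1 + l₂) * u z))) U) :
    ∃ V ∈ 𝓝 (0 : Cn n), V ⊆ D ∧
      IntegrableOn (fun z =>
        g z ^ 2 * Real.exp (-2 * u z)
          - g z ^ 2 * Real.exp (-2 * max (u z) (l₁ / l₂ * v z))) V := by
  obtain ⟨U, hU, hUD, hI⟩ := hint
  refine ⟨U, hU, hUD, ?_⟩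
  have hmeas : AEStronglyMeasurable (fun z =>
      g z ^ 2 * Real.exp (-2 * u z)
        - g z ^ 2 * Real.exp (-2 * max (u z) (l₁ / l₂ * v z)))
      (volume.restrict U) := by
    apply Measurable.aestronglyMeasurable
    fun_prop
  refine hI.mono' hmeas (Filter.Eventually.of_forall fun z => ?_)
  have hg2 : (0:ℝ) ≤ g z ^ 2 := sq_nonneg _
  have hmax : u z ≤ max (u z) (l₁ / l₂ * v z) := le_max_left _ _
  have hnn : (0:ℝ) ≤ g z ^ 2 * Real.exp (-2 * u z)
      - g z ^ 2 * Real.exp (-2 * max (u z) (l₁ / l₂ * v z)) := by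
    have : Real.exp (-2 * max (u z) (l₁ / l₂ * v z)) ≤ Real.exp (-2 * u z) :=
      Real.exp_le_exp.2 (by nlinarith)
    nlinarith
  rw [Real.norm_of_nonneg hnn]
  rcases le_or_gt (l₁ / l₂ * v z) (u z) with h | h
  · have : max (u z) (l₁ / l₂ * v z) = u z := max_eq_left h
    rw [this]
    simp only [sub_self]
    positivity
  · have huv : l₂ * u z ≤ l₁ * v z := by
      have h1 := mul_lt_mul_of_pos_left h hl₂
      have h2 : l₂ * (l₁ / l₂ * v z) = l₁ * v z := by field_simp
      linarith
    have he : Real.exp (-2 * u z) ≤ Real.exp (2 * (l₁ * v z - (1 + l₂) * u z)) :=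
      Real.exp_le_exp.2 (by nlinarith)
    have hpos : (0:ℝ) < Real.exp (-2 * max (u z) (l₁ / l₂ * v z)) := Real.exp_pos _
    nlinarith [Real.exp_pos (-2 * max (u z) (l₁ / l₂ * v z))]
end
end

section
/- Let D ⊆ ℂⁿ be a bounded domain containing the origin o, let u and v be Lebesgue measurable functions on D bounded above near o, let g ≥ 0 be Lebesgue measurable on D, and define A_{u,v}(t) := sup{ c ∈ ℝ : g²e^{2(tv - cu)} is integrable near o }. Assume that A_{u,v}(t) is finite, positive and strictly increasing on an interval (t₀-δ, t₀+δ). Then A_{u,v} is concave on (t₀-δ, t₀+δ), the left derivative b₀ := lim_{Δt→0-} (A_{u,v}(t₀+Δt) - A_{u,v}(t₀))/Δt exists, and for any b > 0 one has A_{max{u, (1/b)v}, v}(t₀) = A_{u,v}(t₀) if and only if b ≤ b₀. -/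
open MeasureTheory Filter Topology
open scoped ENNReal NNReal

noncomputable section

variable {n : ℕ}

/-- The set of exponents `c` such that `g² e^{2(tv - cu)}` is integrable near the origin. -/
def AuvSet (g u v : Cn n → ℝ) (t : ℝ) : Set ℝ :=
  {c : ℝ | ∃ U ∈ 𝓝 (0 : Cn n),
    IntegrableOn (fun z => g z ^ 2 * Real.exp (2 * (t * v z - c * u z))) U}

/-- `A_{u,v}(t) = sup { c : g² e^{2(tv - cu)} integrable near o }`. -/
def Auv (g u v : Cn n → ℝ) (t : ℝ) : ℝ := sSup (AuvSet g u v t)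

/-!
Call `(t, c)` admissible for `(u, v)` if `g² e^{2(tv - cu)}` is integrable near `o`. By Hölder's
inequality the admissible pairs form a convex set, closed downwards in `c` because `u` is bounded
above near `o`; hence `A = A_{u,v}` is concave and has a left derivative `b₀` at `t₀`.

Write `h = max{u, v/b}`. Since `h ≥ u` and `b h ≥ v`, for `s ≥ 0` and `τ ≤ t₀` the weight of `h`
at `(t₀, s + b(t₀ - τ))` is dominated by that of `u` at `(τ, s)`; so if `b > b₀`, a left secant
of `A` at `t₀` of slope below `b` gives an admissible pair for `h` at `t₀` beyond `A(t₀)`.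
Conversely, let `c > A(t₀)` with `(t₀, c)` admissible for `h`. On `{v ≤ b u}` the weight of `h` at
`(t₀, c)` is that of `u`; off it, it is that of `u` at `(t₀ - c/b, 0)`. Interpolating on each piece
with admissible pairs for `u` yields, for small `Δ > 0`, an exponent that is admissible for `u` at
`t₀ - Δ` on both pieces and exceeds `A(t₀) - bΔ`, while `A(t₀ - Δ) ≤ A(t₀) - bΔ` when `b ≤ b₀`.
-/

theorem MeasureTheory.Integrable.rpow_mul_rpow {α : Type*} [MeasurableSpace α] {μ : Measure α}
    {f g : α → ℝ} (hf : Integrable f μ) (hg : Integrable g μ) (hf0 : ∀ a, 0 ≤ f a)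
    (hg0 : ∀ a, 0 ≤ g a) {p q : ℝ} (hp : 0 ≤ p) (hq : 0 ≤ q) (hpq : p + q = 1) :
    Integrable (fun a => f a ^ p * g a ^ q) μ := by
  refine ⟨((Real.continuous_rpow_const hp).comp_aestronglyMeasurable hf.1).mul
    ((Real.continuous_rpow_const hq).comp_aestronglyMeasurable hg.1), ?_⟩
  have hfg0 a : 0 ≤ f a ^ p * g a ^ q :=
    mul_nonneg (Real.rpow_nonneg (hf0 a) p) (Real.rpow_nonneg (hg0 a) q)
  rw [hasFiniteIntegral_iff_ofReal (ae_of_all _ hfg0)]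
  have hF := (hasFiniteIntegral_iff_ofReal (ae_of_all _ hf0)).1 hf.2
  have hG := (hasFiniteIntegral_iff_ofReal (ae_of_all _ hg0)).1 hg.2
  calc ∫⁻ a, ENNReal.ofReal (f a ^ p * g a ^ q) ∂μ
      = ∫⁻ a, ENNReal.ofReal (f a) ^ p * ENNReal.ofReal (g a) ^ q ∂μ := by
        refine lintegral_congr fun a => ?_
        rw [ENNReal.ofReal_mul (Real.rpow_nonneg (hf0 a) p),
          ENNReal.ofReal_rpow_of_nonneg (hf0 a) hp, ENNReal.ofReal_rpow_of_nonneg (hg0 a) hq]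
    _ ≤ (∫⁻ a, ENNReal.ofReal (f a) ∂μ) ^ p * (∫⁻ a, ENNReal.ofReal (g a) ∂μ) ^ q :=
        ENNReal.lintegral_mul_norm_pow_le hf.1.aemeasurable.ennreal_ofReal
          hg.1.aemeasurable.ennreal_ofReal hp hq hpq
    _ < ⊤ := ENNReal.mul_lt_top (ENNReal.rpow_lt_top_of_nonneg hp hF.ne)
        (ENNReal.rpow_lt_top_of_nonneg hq hG.ne)

namespace MeasureTheory.IntegrableAtFilter

variable {α : Type*} [MeasurableSpace α] {μ : Measure α} {l : Filter α}

theorem rpow_mul_rpow {f g : α → ℝ} (hf : IntegrableAtFilter f l μ)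
    (hg : IntegrableAtFilter g l μ) (hf0 : ∀ a, 0 ≤ f a) (hg0 : ∀ a, 0 ≤ g a) {p q : ℝ}
    (hp : 0 ≤ p) (hq : 0 ≤ q) (hpq : p + q = 1) :
    IntegrableAtFilter (fun a => f a ^ p * g a ^ q) l μ := by
  obtain ⟨s, hs, hfs⟩ := hf
  obtain ⟨t, ht, hgt⟩ := hg
  exact ⟨s ∩ t, inter_mem hs ht, Integrable.rpow_mul_rpow (hfs.mono_set Set.inter_subset_left)
    (hgt.mono_set Set.inter_subset_right) hf0 hg0 hp hq hpq⟩

theorem of_eventually_le [l.IsMeasurablyGenerated] {f g : α → ℝ}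
    (hf : IntegrableAtFilter f l μ) (hg : AEStronglyMeasurable g μ)
    (hle : ∀ᶠ a in l, ‖g a‖ ≤ f a) : IntegrableAtFilter g l μ := by
  obtain ⟨s, hs, hfs⟩ := hf
  obtain ⟨t, ht, htm, hle⟩ := hle.exists_measurable_mem
  exact ⟨s ∩ t, inter_mem hs ht, (hfs.mono_set Set.inter_subset_left).mono' hg.restrict
    (ae_restrict_of_ae_restrict_of_subset Set.inter_subset_right
      (ae_restrict_of_forall_mem htm hle))⟩

theorem of_inf_principal_compl {f : α → ℝ} {s : Set α}
    (h : IntegrableAtFilter f (l ⊓ 𝓟 s) μ) (hc : IntegrableAtFilter f (l ⊓ 𝓟 sᶜ) μ) :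
    IntegrableAtFilter f l μ := by
  have hl : l ⊓ 𝓟 s ⊔ l ⊓ 𝓟 sᶜ = l := by
    rw [← inf_sup_left, sup_principal, Set.union_compl_self, principal_univ, inf_top_eq]
  rw [← hl]
  exact sup_iff.2 ⟨h, hc⟩

end MeasureTheory.IntegrableAtFilter

theorem ConcaveOn.hasDerivWithinAt_leftDeriv_of_mem_interior {S : Set ℝ} {f : ℝ → ℝ} {x : ℝ}
    (hf : ConcaveOn ℝ S f) (hx : x ∈ interior S) :
    HasDerivWithinAt f (derivWithin f (Set.Iio x) x) (Set.Iio x) x :=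
  (differentiableWithinAt_neg_iff.1
    (hf.neg.differentiableWithinAt_Iio_of_mem_interior hx)).hasDerivWithinAt

namespace HasDerivWithinAt

variable {f : ℝ → ℝ} {f' x : ℝ}

theorem tendsto_slope_zero_left (h : HasDerivWithinAt f f' (Set.Iio x) x) :
    Tendsto (fun Δ => (f (x + Δ) - f x) / Δ) (𝓝[<] 0) (𝓝 f') := by
  have hshift : Tendsto (fun Δ => x + Δ) (𝓝[<] 0) (𝓝[<] x) :=
    tendsto_nhdsWithin_of_tendsto_nhds_of_eventually_within _
      ((continuous_const_add x).tendsto' 0 x (add_zero x) |>.mono_left nhdsWithin_le_nhds)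
      (eventually_nhdsWithin_of_forall fun Δ (hΔ : Δ < 0) => by simpa using hΔ)
  have hslope := (hasDerivWithinAt_iff_tendsto_slope' Set.self_notMem_Iio).1 h
  refine (hslope.comp hshift).congr fun Δ => ?_
  simp [slope_def_field]

theorem exists_slope_lt {S : Set ℝ} {b : ℝ} (h : HasDerivWithinAt f f' (Set.Iio x) x)
    (hS : S ∈ 𝓝 x) (hb : f' < b) : ∃ τ ∈ S, τ < x ∧ slope f τ x < b := by
  have hslope := (hasDerivWithinAt_iff_tendsto_slope' Set.self_notMem_Iio).1 h
  have hev := hslope.eventually (gt_mem_nhds hb)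
  obtain ⟨τ, hτb, hτS, hτ⟩ :=
    (hev.and (Eventually.and (mem_nhdsWithin_of_mem_nhds hS) self_mem_nhdsWithin)).exists
  exact ⟨τ, hτS, hτ, by rwa [slope_comm]⟩

end HasDerivWithinAt

section Integrand

variable {α : Type*}

def auvIntegrand (g u v : α → ℝ) (t c : ℝ) (z : α) : ℝ :=
  g z ^ 2 * Real.exp (2 * (t * v z - c * u z))

variable {g u v : α → ℝ}

theorem auvIntegrand_nonneg (t c : ℝ) (z : α) : 0 ≤ auvIntegrand g u v t c z := by
  unfold auvIntegrand; positivity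

theorem auvIntegrand_add_add {p q : ℝ} (hpq : p + q = 1) (t₁ c₁ t₂ c₂ : ℝ) (z : α) :
    auvIntegrand g u v (p * t₁ + q * t₂) (p * c₁ + q * c₂) z
      = auvIntegrand g u v t₁ c₁ z ^ p * auvIntegrand g u v t₂ c₂ z ^ q := by
  unfold auvIntegrand
  rw [Real.mul_rpow (sq_nonneg _) (Real.exp_pos _).le,
    Real.mul_rpow (sq_nonneg _) (Real.exp_pos _).le, ← Real.exp_mul, ← Real.exp_mul,
    mul_mul_mul_comm, ← Real.rpow_add' (sq_nonneg _) (by rw [hpq]; exact one_ne_zero), hpq,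
    Real.rpow_one, ← Real.exp_add]
  congr 2
  ring

variable [MeasurableSpace α]

theorem measurable_auvIntegrand (hg : Measurable g) (hu : Measurable u) (hv : Measurable v)
    (t c : ℝ) : Measurable (auvIntegrand g u v t c) := by
  unfold auvIntegrand; fun_prop

end Integrand

section IntegrableAtFilter

variable {α : Type*} [MeasurableSpace α] {μ : Measure α} {l : Filter α} {g u v : α → ℝ}

theorem MeasureTheory.IntegrableAtFilter.auvIntegrand_add_add {t₁ c₁ t₂ c₂ p q : ℝ}
    (h₁ : IntegrableAtFilter (auvIntegrand g u v t₁ c₁) l μ)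
    (h₂ : IntegrableAtFilter (auvIntegrand g u v t₂ c₂) l μ) (hp : 0 ≤ p) (hq : 0 ≤ q)
    (hpq : p + q = 1) :
    IntegrableAtFilter (auvIntegrand g u v (p * t₁ + q * t₂) (p * c₁ + q * c₂)) l μ := by
  rw [show auvIntegrand g u v (p * t₁ + q * t₂) (p * c₁ + q * c₂) = _ from
    funext (_root_.auvIntegrand_add_add hpq t₁ c₁ t₂ c₂)]
  exact h₁.rpow_mul_rpow h₂ (auvIntegrand_nonneg _ _) (auvIntegrand_nonneg _ _) hp hq hpq

/-- Lowering `c` multiplies the integrand by `e^{2(c - c')u}`, which is bounded where `u` is. -/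
theorem MeasureTheory.IntegrableAtFilter.auvIntegrand_of_le [l.IsMeasurablyGenerated]
    (hg : Measurable g) (hu : Measurable u) (hv : Measurable v) {M t c c' : ℝ}
    (hM : ∀ᶠ z in l, u z ≤ M) (hc : c' ≤ c) (h : IntegrableAtFilter (auvIntegrand g u v t c) l μ) :
    IntegrableAtFilter (auvIntegrand g u v t c') l μ := by
  refine (h.smul (Real.exp (2 * (c - c') * M))).of_eventually_le
    (measurable_auvIntegrand hg hu hv t c').aestronglyMeasurable ?_
  filter_upwards [hM] with z hz
  rw [Real.norm_of_nonneg (auvIntegrand_nonneg _ _ _), Pi.smul_apply, smul_eq_mul,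
    auvIntegrand, auvIntegrand, mul_left_comm, ← Real.exp_add]
  gcongr
  nlinarith

theorem eventually_exists_integrableAtFilter_auvIntegrand_of_lt {a b c c₁ t₀ t₁ : ℝ}
    (h₀ : IntegrableAtFilter (auvIntegrand g u v t₀ c) l μ)
    (h₁ : IntegrableAtFilter (auvIntegrand g u v t₁ c₁) l μ) (ht : t₁ < t₀) (hac : a < c) :
    ∀ᶠ Δ in 𝓝[>] 0, ∃ c' > a - b * Δ, IntegrableAtFilter (auvIntegrand g u v (t₀ - Δ) c') l μ := by
  have hline : ∀ᶠ Δ in 𝓝 (0 : ℝ), a - b * Δ < c - Δ / (t₀ - t₁) * (c - c₁) :=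
    ContinuousAt.eventually_lt (by fun_prop) (by fun_prop) (by simpa using hac)
  filter_upwards [nhdsWithin_le_nhds hline, Ioo_mem_nhdsGT (sub_pos.2 ht)] with Δ hΔ hΔI
  have hp : 0 < Δ / (t₀ - t₁) := div_pos hΔI.1 (sub_pos.2 ht)
  have hp1 : Δ / (t₀ - t₁) < 1 := (div_lt_one (sub_pos.2 ht)).2 hΔI.2
  refine ⟨_, hΔ, ?_⟩
  convert h₁.auvIntegrand_add_add h₀ hp.le (sub_nonneg.2 hp1.le)
    (add_sub_cancel _ _) using 2
  · field_simp [(sub_pos.2 ht).ne']; ring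
  · ring

/-- Interpolates between the level `t₀` and the point `(t₀ - c / b, 0)`; the segment has slope
`b c₀ / c < b`, so for small `Δ` it passes above the line of slope `b` through `(t₀, a)`. -/
theorem eventually_exists_integrableAtFilter_auvIntegrand_of_slope {a b c t₀ : ℝ}
    (h₀ : ∀ c₀ < a, IntegrableAtFilter (auvIntegrand g u v t₀ c₀) l μ)
    (h₁ : IntegrableAtFilter (auvIntegrand g u v (t₀ - c / b) 0) l μ) (hb : 0 < b)
    (hc : 0 < c) (hac : a < c) :
    ∀ᶠ Δ in 𝓝[>] 0, ∃ c' > a - b * Δ, IntegrableAtFilter (auvIntegrand g u v (t₀ - Δ) c') l μ := by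
  filter_upwards [Ioo_mem_nhdsGT (div_pos hc hb)] with Δ hΔ
  have hp : 0 < b * Δ / c := div_pos (mul_pos hb hΔ.1) hc
  have hp1 : 0 < 1 - b * Δ / c := by
    rw [sub_pos, div_lt_one hc, mul_comm]; exact (lt_div_iff₀ hb).1 hΔ.2
  have hbound : (a - b * Δ) / (1 - b * Δ / c) < a := by
    rw [div_lt_iff₀ hp1, mul_sub, mul_one, sub_lt_sub_iff_left, mul_div_assoc',
      div_lt_iff₀ hc]
    nlinarith [mul_pos hb hΔ.1]
  obtain ⟨c₀, hc₀, hc₀a⟩ := exists_between hbound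
  refine ⟨(1 - b * Δ / c) * c₀, by rwa [div_lt_iff₀' hp1] at hc₀, ?_⟩
  convert h₁.auvIntegrand_add_add (h₀ c₀ hc₀a) hp.le hp1.le
    (add_sub_cancel _ _) using 2
  · field_simp; ring
  · ring

end IntegrableAtFilter

section MaxWeight

variable {α : Type*} {g u v : α → ℝ} {b : ℝ}

theorem auvIntegrand_max_le (hb : 0 < b) {s t τ : ℝ} (hs : 0 ≤ s) (hτ : τ ≤ t) (z : α) :
    auvIntegrand g (fun z => max (u z) (b⁻¹ * v z)) v t (s + b * (t - τ)) z
      ≤ auvIntegrand g u v τ s z := by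
  unfold auvIntegrand
  gcongr ?_ * Real.exp (2 * ?_)
  have hu : s * u z ≤ s * max (u z) (b⁻¹ * v z) := by gcongr; exact le_max_left _ _
  have hv : (t - τ) * v z ≤ b * (t - τ) * max (u z) (b⁻¹ * v z) := by
    calc (t - τ) * v z = b * (t - τ) * (b⁻¹ * v z) := by field_simp
      _ ≤ _ := mul_le_mul_of_nonneg_left (le_max_right _ _) (mul_nonneg hb.le (sub_nonneg.2 hτ))
  nlinarith

theorem auvIntegrand_max_of_le {t c : ℝ} {z : α} (hz : b⁻¹ * v z ≤ u z) :
    auvIntegrand g (fun z => max (u z) (b⁻¹ * v z)) v t c z = auvIntegrand g u v t c z := by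
  simp only [auvIntegrand, max_eq_left hz]

theorem auvIntegrand_max_of_lt {t c : ℝ} {z : α} (hz : u z < b⁻¹ * v z) :
    auvIntegrand g (fun z => max (u z) (b⁻¹ * v z)) v t c z
      = auvIntegrand g u v (t - c / b) 0 z := by
  simp only [auvIntegrand, max_eq_right hz.le]
  ring_nf

variable [MeasurableSpace α] {μ : Measure α} {l : Filter α} [l.IsMeasurablyGenerated]

theorem MeasureTheory.IntegrableAtFilter.auvIntegrand_of_max (hg : Measurable g)
    (hu : Measurable u) (hv : Measurable v) {t c : ℝ}
    (h : IntegrableAtFilter (auvIntegrand g (fun z => max (u z) (b⁻¹ * v z)) v t c) l μ) :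
    IntegrableAtFilter (auvIntegrand g u v t c) (l ⊓ 𝓟 {z | b⁻¹ * v z ≤ u z}) μ := by
  have hR : MeasurableSet {z | b⁻¹ * v z ≤ u z} := measurableSet_le (by fun_prop) hu
  have := principal_isMeasurablyGenerated_iff.2 hR
  refine h.inf_of_left.of_eventually_le
    (measurable_auvIntegrand hg hu hv t c).aestronglyMeasurable
    (eventually_inf_principal.2 (Eventually.of_forall fun z hz => ?_))
  rw [Real.norm_of_nonneg (auvIntegrand_nonneg _ _ _), auvIntegrand_max_of_le hz]

theorem MeasureTheory.IntegrableAtFilter.auvIntegrand_of_max_compl (hg : Measurable g)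
    (hu : Measurable u) (hv : Measurable v) {t c : ℝ}
    (h : IntegrableAtFilter (auvIntegrand g (fun z => max (u z) (b⁻¹ * v z)) v t c) l μ) :
    IntegrableAtFilter (auvIntegrand g u v (t - c / b) 0) (l ⊓ 𝓟 {z | b⁻¹ * v z ≤ u z}ᶜ) μ := by
  have hR : MeasurableSet {z | b⁻¹ * v z ≤ u z} := measurableSet_le (by fun_prop) hu
  have := principal_isMeasurablyGenerated_iff.2 hR.compl
  refine h.inf_of_left.of_eventually_le
    (measurable_auvIntegrand hg hu hv _ 0).aestronglyMeasurable
    (eventually_inf_principal.2 (Eventually.of_forall fun z hz => ?_))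
  rw [Real.norm_of_nonneg (auvIntegrand_nonneg _ _ _), auvIntegrand_max_of_lt (not_le.1 hz)]

end MaxWeight

section Auv

variable {g u v : Cn n → ℝ}

theorem mem_auvSet_iff {t c : ℝ} :
    c ∈ AuvSet g u v t ↔ IntegrableAtFilter (auvIntegrand g u v t c) (𝓝 0) :=
  Iff.rfl

theorem mem_auvSet_of_le (hg : Measurable g) (hu : Measurable u) (hv : Measurable v)
    (hub : ∃ M : ℝ, ∀ᶠ z in 𝓝 (0 : Cn n), u z ≤ M) {t c c' : ℝ} (hc : c ∈ AuvSet g u v t)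
    (hc' : c' ≤ c) : c' ∈ AuvSet g u v t :=
  let ⟨_, hM⟩ := hub
  IntegrableAtFilter.auvIntegrand_of_le hg hu hv hM hc' hc

theorem mem_auvSet_of_lt_auv (hg : Measurable g) (hu : Measurable u) (hv : Measurable v)
    (hub : ∃ M : ℝ, ∀ᶠ z in 𝓝 (0 : Cn n), u z ≤ M) {t c : ℝ} (hne : (AuvSet g u v t).Nonempty)
    (hc : c < Auv g u v t) : c ∈ AuvSet g u v t :=
  let ⟨_, hc', hcc'⟩ := exists_lt_of_lt_csSup hne hc
  mem_auvSet_of_le hg hu hv hub hc' hcc'.le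

theorem add_mem_auvSet {t₁ c₁ t₂ c₂ p q : ℝ} (h₁ : c₁ ∈ AuvSet g u v t₁)
    (h₂ : c₂ ∈ AuvSet g u v t₂) (hp : 0 ≤ p) (hq : 0 ≤ q) (hpq : p + q = 1) :
    p * c₁ + q * c₂ ∈ AuvSet g u v (p * t₁ + q * t₂) :=
  IntegrableAtFilter.auvIntegrand_add_add h₁ h₂ hp hq hpq

theorem concaveOn_auv (hg : Measurable g) (hu : Measurable u) (hv : Measurable v)
    (hub : ∃ M : ℝ, ∀ᶠ z in 𝓝 (0 : Cn n), u z ≤ M) {I : Set ℝ} (hI : Convex ℝ I)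
    (hne : ∀ t ∈ I, (AuvSet g u v t).Nonempty) (hbdd : ∀ t ∈ I, BddAbove (AuvSet g u v t)) :
    ConcaveOn ℝ I (Auv g u v) := by
  refine ⟨hI, fun x hx y hy p q hp hq hpq => le_of_forall_pos_le_add fun ε hε => ?_⟩
  have hmem := add_mem_auvSet
    (mem_auvSet_of_lt_auv hg hu hv hub (hne x hx) (sub_lt_self _ hε))
    (mem_auvSet_of_lt_auv hg hu hv hub (hne y hy) (sub_lt_self _ hε)) hp hq hpq
  have hle : _ ≤ Auv g u v _ := le_csSup (hbdd _ (hI hx hy hp hq hpq)) hmem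
  simp only [smul_eq_mul] at hle ⊢
  linear_combination hle + ε * hpq

variable {b : ℝ}

theorem add_mem_auvSet_max (hg : Measurable g) (hu : Measurable u) (hv : Measurable v)
    (hb : 0 < b) {s t τ : ℝ} (hs : 0 ≤ s) (hτ : τ ≤ t) (h : s ∈ AuvSet g u v τ) :
    s + b * (t - τ) ∈ AuvSet g (fun z => max (u z) (b⁻¹ * v z)) v t := by
  rw [mem_auvSet_iff] at h ⊢
  refine h.of_eventually_le (measurable_auvIntegrand hg (by fun_prop) hv _ _).aestronglyMeasurable
    (Eventually.of_forall fun z => ?_)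
  rw [Real.norm_of_nonneg (auvIntegrand_nonneg _ _ _)]
  exact auvIntegrand_max_le hb hs hτ z

theorem auv_max_eq_iff (hg : Measurable g) (hu : Measurable u) (hv : Measurable v)
    (hb : 0 < b) {t : ℝ} (hne : (AuvSet g u v t).Nonempty) (hpos : 0 < Auv g u v t) :
    Auv g (fun z => max (u z) (b⁻¹ * v z)) v t = Auv g u v t ↔
      Auv g u v t ∈ upperBounds (AuvSet g (fun z => max (u z) (b⁻¹ * v z)) v t) := by
  have hmax {c : ℝ} (hc : c ∈ AuvSet g u v t) (h0 : 0 ≤ c) :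
      c ∈ AuvSet g (fun z => max (u z) (b⁻¹ * v z)) v t := by
    simpa using add_mem_auvSet_max hg hu hv hb h0 le_rfl hc
  constructor
  · intro heq
    have hbdd : BddAbove (AuvSet g (fun z => max (u z) (b⁻¹ * v z)) v t) := by
      by_contra hnb
      rw [Auv, Real.sSup_of_not_bddAbove hnb] at heq
      exact hpos.ne heq
    exact heq ▸ fun c hc => le_csSup hbdd hc
  · intro hA
    obtain ⟨c, hc, hc0⟩ := exists_lt_of_lt_csSup hne hpos
    refine le_antisymm (csSup_le ⟨c, hmax hc hc0.le⟩ hA) (le_of_forall_lt fun x hx => ?_)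
    obtain ⟨c, hc, hxc⟩ := exists_lt_of_lt_csSup hne (max_lt hx hpos)
    exact (le_max_left _ _).trans_lt (hxc.trans_le
      (le_csSup ⟨_, hA⟩ (hmax hc ((le_max_right _ _).trans hxc.le))))

theorem auv_notMem_upperBounds_auvSet_max (hg : Measurable g) (hu : Measurable u)
    (hv : Measurable v) (hb : 0 < b) {t τ : ℝ} (hτ : τ < t) (hne : (AuvSet g u v τ).Nonempty)
    (hpos : 0 < Auv g u v τ) (hslope : slope (Auv g u v) τ t < b) :
    Auv g u v t ∉ upperBounds (AuvSet g (fun z => max (u z) (b⁻¹ * v z)) v t) := by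
  intro hA
  rw [slope_def_field, div_lt_iff₀ (sub_pos.2 hτ)] at hslope
  obtain ⟨c, hc, hxc⟩ :=
    exists_lt_of_lt_csSup hne (max_lt (by linarith : Auv g u v t - b * (t - τ) < Auv g u v τ) hpos)
  have := hA (add_mem_auvSet_max hg hu hv hb ((le_max_right _ _).trans hxc.le) hτ.le hc)
  linarith [le_max_left (Auv g u v t - b * (t - τ)) 0]

theorem auv_mem_upperBounds_auvSet_max (hg : Measurable g) (hu : Measurable u)
    (hv : Measurable v) (hub : ∃ M : ℝ, ∀ᶠ z in 𝓝 (0 : Cn n), u z ≤ M) (hb : 0 < b)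
    {t₀ t₁ : ℝ} (ht : t₁ < t₀) (hne : ∀ t ∈ Set.Icc t₁ t₀, (AuvSet g u v t).Nonempty)
    (hbdd : ∀ t ∈ Set.Ioo t₁ t₀, BddAbove (AuvSet g u v t))
    (hslope : ∀ t ∈ Set.Ioo t₁ t₀, b ≤ slope (Auv g u v) t t₀) (hpos : 0 < Auv g u v t₀) :
    Auv g u v t₀ ∈ upperBounds (AuvSet g (fun z => max (u z) (b⁻¹ * v z)) v t₀) := by
  intro c hc
  by_contra! hlt
  obtain ⟨M, hM⟩ := hub
  obtain ⟨c₁, hc₁⟩ := hne t₁ ⟨le_rfl, ht.le⟩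
  have hlow := eventually_exists_integrableAtFilter_auvIntegrand_of_lt (b := b)
    ((mem_auvSet_iff.1 hc).auvIntegrand_of_max hg hu hv) (mem_auvSet_iff.1 hc₁).inf_of_left ht hlt
  have hhigh := eventually_exists_integrableAtFilter_auvIntegrand_of_slope
    (fun c₀ hc₀ => (mem_auvSet_iff.1
      (mem_auvSet_of_lt_auv hg hu hv ⟨M, hM⟩ (hne t₀ ⟨ht.le, le_rfl⟩) hc₀)).inf_of_left)
    ((mem_auvSet_iff.1 hc).auvIntegrand_of_max_compl hg hu hv) hb (hpos.trans hlt) hlt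
  obtain ⟨Δ, ⟨c₂, hc₂, h₂⟩, ⟨c₃, hc₃, h₃⟩, hΔ⟩ :=
    (hlow.and (hhigh.and (Ioo_mem_nhdsGT (sub_pos.2 ht)))).exists
  have hR : MeasurableSet {z | b⁻¹ * v z ≤ u z} := measurableSet_le (by fun_prop) hu
  have := principal_isMeasurablyGenerated_iff.2 hR
  have := principal_isMeasurablyGenerated_iff.2 hR.compl
  have hmem : min c₂ c₃ ∈ AuvSet g u v (t₀ - Δ) :=
    IntegrableAtFilter.of_inf_principal_compl
      (h₂.auvIntegrand_of_le hg hu hv (hM.filter_mono inf_le_left) (min_le_left _ _))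
      (h₃.auvIntegrand_of_le hg hu hv (hM.filter_mono inf_le_left) (min_le_right _ _))
  have hτ : t₀ - Δ ∈ Set.Ioo t₁ t₀ := ⟨by linarith [hΔ.2], by linarith [hΔ.1]⟩
  have hle : min c₂ c₃ ≤ Auv g u v (t₀ - Δ) := le_csSup (hbdd _ hτ) hmem
  have hdrop := hslope _ hτ
  rw [slope_def_field, sub_sub_cancel, le_div_iff₀ hΔ.1] at hdrop
  linarith [lt_min hc₂ hc₃]

end Auv

theorem statement13_general {n : ℕ}
    (u v g : Cn n → ℝ) (hu : Measurable u) (hv : Measurable v) (hg : Measurable g)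
    (hub : ∃ M : ℝ, ∀ᶠ z in 𝓝 (0 : Cn n), u z ≤ M)
    (t₀ δ : ℝ) (hδ : 0 < δ)
    (hfin : ∀ t ∈ Set.Ioo (t₀ - δ) (t₀ + δ),
      (AuvSet g u v t).Nonempty ∧ BddAbove (AuvSet g u v t) ∧ 0 < Auv g u v t) :
    ConcaveOn ℝ (Set.Ioo (t₀ - δ) (t₀ + δ)) (Auv g u v) ∧
    ∃ b₀ : ℝ,
      Tendsto (fun Δt : ℝ => (Auv g u v (t₀ + Δt) - Auv g u v t₀) / Δt)
        (𝓝[<] (0 : ℝ)) (𝓝 b₀) ∧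
      ∀ b : ℝ, 0 < b →
        (Auv g (fun z => max (u z) (b⁻¹ * v z)) v t₀ = Auv g u v t₀ ↔ b ≤ b₀) := by
  have ht₀ : t₀ ∈ Set.Ioo (t₀ - δ) (t₀ + δ) := ⟨by linarith, by linarith⟩
  have hconc : ConcaveOn ℝ (Set.Ioo (t₀ - δ) (t₀ + δ)) (Auv g u v) :=
    concaveOn_auv hg hu hv hub (convex_Ioo _ _) (fun t ht => (hfin t ht).1)
      (fun t ht => (hfin t ht).2.1)
  have hderiv := hconc.hasDerivWithinAt_leftDeriv_of_mem_interior
    (by rwa [isOpen_Ioo.interior_eq])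
  refine ⟨hconc, _, hderiv.tendsto_slope_zero_left, fun b hb => ?_⟩
  rw [auv_max_eq_iff hg hu hv hb (hfin t₀ ht₀).1 (hfin t₀ ht₀).2.2]
  constructor
  · intro hA
    by_contra! hlt
    obtain ⟨τ, hτI, hτ, hslope⟩ := hderiv.exists_slope_lt (isOpen_Ioo.mem_nhds ht₀) hlt
    exact auv_notMem_upperBounds_auvSet_max hg hu hv hb hτ (hfin τ hτI).1 (hfin τ hτI).2.2
      hslope hA
  · intro hle
    have hsub : Set.Icc (t₀ - δ / 2) t₀ ⊆ Set.Ioo (t₀ - δ) (t₀ + δ) := fun t ht =>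
      ⟨by linarith [ht.1], by linarith [ht.2]⟩
    exact auv_mem_upperBounds_auvSet_max hg hu hv hub hb (by linarith)
      (fun t ht => (hfin t (hsub ht)).1)
      (fun t ht => (hfin t (hsub (Set.Ioo_subset_Icc_self ht))).2.1)
      (fun t ht => hle.trans (hconc.leftDeriv_le_slope (hsub (Set.Ioo_subset_Icc_self ht)) ht₀
        ht.2 hderiv.differentiableWithinAt))
      (hfin t₀ ht₀).2.2

/-- concavity of `A_{u,v}`, existence of its left derivative `b₀` at `t₀`,
and the characterization `A_{max{u,(1/b)v},v}(t₀) = A_{u,v}(t₀) ↔ b ≤ b₀`. -/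
theorem statement13 {n : ℕ} (D : Set (Cn n)) (hD : IsOpen D) (hDconn : IsConnected D)
    (hDb : Bornology.IsBounded D) (h0 : (0 : Cn n) ∈ D)
    (u v g : Cn n → ℝ) (hu : Measurable u) (hv : Measurable v) (hg : Measurable g)
    (hub : ∃ M : ℝ, ∀ᶠ z in 𝓝 (0 : Cn n), u z ≤ M)
    (hvb : ∃ M : ℝ, ∀ᶠ z in 𝓝 (0 : Cn n), v z ≤ M)
    (hgpos : ∀ z ∈ D, 0 ≤ g z)
    (t₀ δ : ℝ) (hδ : 0 < δ)
    (hfin : ∀ t ∈ Set.Ioo (t₀ - δ) (t₀ + δ),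
      (AuvSet g u v t).Nonempty ∧ BddAbove (AuvSet g u v t) ∧ 0 < Auv g u v t)
    (hmono : StrictMonoOn (Auv g u v) (Set.Ioo (t₀ - δ) (t₀ + δ))) :
    ConcaveOn ℝ (Set.Ioo (t₀ - δ) (t₀ + δ)) (Auv g u v) ∧
    ∃ b₀ : ℝ,
      Tendsto (fun Δt : ℝ => (Auv g u v (t₀ + Δt) - Auv g u v t₀) / Δt)
        (𝓝[<] (0 : ℝ)) (𝓝 b₀) ∧
      ∀ b : ℝ, 0 < b →
        (Auv g (fun z => max (u z) (b⁻¹ * v z)) v t₀ = Auv g u v t₀ ↔ b ≤ b₀) :=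
  statement13_general u v g hu hv hg hub t₀ δ hδ hfin
end
end
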